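/- Define m(ξ) = 2ξ·coth(ξ) − ξ²·csch²(ξ) − 1 for ξ ≠ 0, where coth(x) = cosh(x)/sinh(x) and csch(x) = 1/sinh(x), and write ⟨ξ⟩ = √(1+ξ²). Then there exists a constant c > 0 such that for all ξ > 0 the derivative m′(ξ) satisfies m′(ξ) ≥ c·ξ/⟨ξ⟩. In particular m is strictly increasing on (0,∞). -/

import Mathlib

/-- Hyperbolic cotangent. -/
noncomputable def coth (x : ℝ) : ℝ := Real.cosh x / Real.sinh x

/-- Hyperbolic cosecant. -/
noncomputable def csch (x : ℝ) : ℝ := 1 / Real.sinh x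

/-- Japanese bracket `⟨ξ⟩ = √(1+ξ²)`. -/
noncomputable def jb (ξ : ℝ) : ℝ := Real.sqrt (1 + ξ ^ 2)

/-- The group-velocity symbol `m(ξ) = 2ξcoth(ξ) − ξ²csch²(ξ) − 1`. -/
noncomputable def mfun (ξ : ℝ) : ℝ := 2 * ξ * coth ξ - ξ ^ 2 * csch ξ ^ 2 - 1

lemma mfun_hasDerivAt {ξ : ℝ} (hξ : 0 < ξ) :
    HasDerivAt mfun
      (2 * (Real.cosh ξ * Real.sinh ξ ^ 2 - 2 * ξ * Real.sinh ξ + ξ ^ 2 * Real.cosh ξ)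
        / Real.sinh ξ ^ 3) ξ := by
  have hs : Real.sinh ξ ≠ 0 := ne_of_gt (Real.sinh_pos_iff.2 hξ)
  have heq : mfun = fun x => 2 * x * (Real.cosh x / Real.sinh x)
      - x ^ 2 * (1 / Real.sinh x) ^ 2 - 1 := by
    funext x; simp [mfun, coth, csch]
  rw [heq]
  have hsinh := Real.hasDerivAt_sinh ξ
  have hcosh := Real.hasDerivAt_cosh ξ
  have h1 : HasDerivAt (fun x => Real.cosh x / Real.sinh x)
      ((Real.sinh ξ * Real.sinh ξ - Real.cosh ξ * Real.cosh ξ) / Real.sinh ξ ^ 2) ξ :=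
    hcosh.div hsinh hs
  have h2 : HasDerivAt (fun x : ℝ => 2 * x) 2 ξ := by
    simpa using (hasDerivAt_id ξ).const_mul 2
  have h3 : HasDerivAt (fun x => 2 * x * (Real.cosh x / Real.sinh x))
      (2 * (Real.cosh ξ / Real.sinh ξ) +
        2 * ξ * ((Real.sinh ξ * Real.sinh ξ - Real.cosh ξ * Real.cosh ξ) / Real.sinh ξ ^ 2)) ξ :=
    h2.mul h1
  have h4 : HasDerivAt (fun x => 1 / Real.sinh x)
      ((0 * Real.sinh ξ - 1 * Real.cosh ξ) / Real.sinh ξ ^ 2) ξ :=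
    (hasDerivAt_const ξ (1:ℝ)).div hsinh hs
  have h5 : HasDerivAt (fun x => (1 / Real.sinh x) ^ 2)
      (2 * (1 / Real.sinh ξ) ^ 1 *
        ((0 * Real.sinh ξ - 1 * Real.cosh ξ) / Real.sinh ξ ^ 2)) ξ := by
    simpa using h4.fun_pow 2
  have h6 : HasDerivAt (fun x : ℝ => x ^ 2) (2 * ξ) ξ := by
    simpa using hasDerivAt_pow 2 ξ
  have h7 := (h3.fun_sub (h6.fun_mul h5)).sub_const 1
  refine h7.congr_deriv ?_
  symm
  have h2 := Real.cosh_sq_sub_sinh_sq ξ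
  field_simp
  ring_nf
  linear_combination (ξ * Real.sinh ξ) * h2

theorem mfun_deriv_lower_bound :
    ∃ c : ℝ, 0 < c ∧ ∀ ξ : ℝ, 0 < ξ → deriv mfun ξ ≥ c * ξ / jb ξ := by
  refine ⟨1, one_pos, fun ξ hξ => ?_⟩
  set s := Real.sinh ξ with hs_def
  set c := Real.cosh ξ with hc_def
  have hs : 0 < s := Real.sinh_pos_iff.2 hξ
  have hc1 : 1 ≤ c := Real.one_le_cosh ξ
  have hsq : c ^ 2 - s ^ 2 = 1 := Real.cosh_sq_sub_sinh_sq ξ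
  -- cosh ξ ≥ 1 + ξ²/2
  have hhalf : ξ / 2 < Real.sinh (ξ / 2) := Real.self_lt_sinh_iff.2 (by linarith)
  have hcosh2 : c = 2 * Real.sinh (ξ / 2) ^ 2 + 1 := by
    have := Real.cosh_two_mul (ξ / 2)
    have h2 : Real.cosh (ξ / 2) ^ 2 = Real.sinh (ξ / 2) ^ 2 + 1 := by
      nlinarith [Real.cosh_sq_sub_sinh_sq (ξ / 2)]
    rw [hc_def]
    have : (2 : ℝ) * (ξ / 2) = ξ := by ring
    rw [← this, Real.cosh_two_mul, h2]
    ring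
  have hclb : 1 + ξ ^ 2 / 2 ≤ c := by
    rw [hcosh2]
    nlinarith [hhalf, hξ]
  have hjb : 0 < jb ξ := Real.sqrt_pos.2 (by positivity)
  have hjbsq : jb ξ ^ 2 = 1 + ξ ^ 2 := Real.sq_sqrt (by positivity)
  rw [(mfun_hasDerivAt hξ).deriv]
  -- Step 1: D ≥ 2(c-1)/s
  have step1 : 2 * (c - 1) / s ≤ 2 * (c * s ^ 2 - 2 * ξ * s + ξ ^ 2 * c) / s ^ 3 := by
    rw [div_le_div_iff₀ hs (by positivity)]
    nlinarith [mul_nonneg hs.le (sq_nonneg (s - ξ)),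
      mul_nonneg hs.le (mul_nonneg (sq_nonneg ξ) (by linarith : (0:ℝ) ≤ c - 1))]
  -- Step 2: ξ / jb ξ ≤ 2(c-1)/s, i.e. ξ * s ≤ 2(c-1) * jb ξ
  have key : ξ * s ≤ 2 * (c - 1) * jb ξ := by
    have hB : 0 ≤ ξ * s := by positivity
    have hA : 0 ≤ 2 * (c - 1) * jb ξ := by
      have : (0:ℝ) ≤ c - 1 := by linarith
      positivity
    have hsq2 : (ξ * s) ^ 2 ≤ (2 * (c - 1) * jb ξ) ^ 2 := by
      have : (2 * (c - 1) * jb ξ) ^ 2 = 4 * (c - 1) ^ 2 * (1 + ξ ^ 2) := by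
        rw [mul_pow, hjbsq]; ring
      rw [this]
      -- ξ² s² = ξ² (c-1)(c+1), need 4(c-1)²(1+ξ²) ≥ ξ²(c-1)(c+1)
      have hs2 : s ^ 2 = (c - 1) * (c + 1) := by nlinarith [hsq]
      rw [mul_pow, hs2]
      nlinarith [hclb, sq_nonneg ξ, hc1, sq_nonneg (c - 1)]
    calc ξ * s = Real.sqrt ((ξ * s) ^ 2) := (Real.sqrt_sq hB).symm
      _ ≤ Real.sqrt ((2 * (c - 1) * jb ξ) ^ 2) := Real.sqrt_le_sqrt hsq2
      _ = 2 * (c - 1) * jb ξ := Real.sqrt_sq hA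
  have step2 : 1 * ξ / jb ξ ≤ 2 * (c - 1) / s := by
    rw [div_le_div_iff₀ hjb hs]
    linarith [key]
  linarith [step1, step2]
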